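/- arXiv:1905.05608 — 4 statements merged into one kernel-verified Lean document; each statement's English description precedes it below -/
import Mathlib

section
/- Let α ∈ [0,1], N ≥ 1, h > 0, and define the discrete fractional derivatives Δ_-^α z_k := h^{-α} ∑_{n=0}^k α_n z_{k-n} and Δ_+^α z_k := h^{-α} ∑_{n=0}^{N-k} α_n z_{k+n}, where α_n are the Grünwald–Letnikov coefficients. If (F_k)_{0:N} and (G_k)_{0:N} are real sequences with F_0 = F_N = G_0 = G_N = 0, then ∑_{k=0}^{N-1} (Δ_+^α G_k) F_k = ∑_{k=1}^{N} G_k (Δ_-^α F_k). -/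
/-! Both sides are `h^(-α)` times the sum of `α_(j-k) G_j F_k` over the triangle
`0 ≤ k ≤ j ≤ N`, summed by rows on the left and by columns on the right; the left side
misses the corner `k = j = N` and the right side the corner `k = j = 0`, and these
corners vanish because `F_N = 0` and `G_0 = 0`. -/

open Finset

/-- Grünwald–Letnikov coefficients: `α_n = (-1)^n * binom(α, n)`,
i.e. `α_0 = 1`, `α_n = -α(1-α)(2-α)⋯(n-1-α)/n!` for `n ≥ 1`. -/
noncomputable def glCoef (α : ℝ) (n : ℕ) : ℝ :=
  (-1 : ℝ) ^ n * (∏ i ∈ Finset.range n, (α - (i : ℝ))) / (n.factorial : ℝ)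

/-- Retarded discrete fractional derivative `Δ_-^α z_k`. -/
noncomputable def dfracMinus (α h : ℝ) (z : ℕ → ℝ) (k : ℕ) : ℝ :=
  h ^ (-α) * ∑ n ∈ Finset.range (k + 1), glCoef α n * z (k - n)

/-- Advanced discrete fractional derivative `Δ_+^α z_k` (with horizon `N`). -/
noncomputable def dfracPlus (α h : ℝ) (N : ℕ) (z : ℕ → ℝ) (k : ℕ) : ℝ :=
  h ^ (-α) * ∑ n ∈ Finset.range (N - k + 1), glCoef α n * z (k + n)

/-- Composed retarded operator `Δ_-^α Δ_-^α z_k`. -/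
noncomputable def ddfracMinus (α h : ℝ) (z : ℕ → ℝ) (k : ℕ) : ℝ :=
  h ^ (-(2 * α)) * ∑ n ∈ Finset.range (k + 1), glCoef α n *
    ∑ p ∈ Finset.range (k - n + 1), glCoef α p * z (k - n - p)

/-- Composed advanced operator `Δ_+^α Δ_+^α z_k`. -/
noncomputable def ddfracPlus (α h : ℝ) (N : ℕ) (z : ℕ → ℝ) (k : ℕ) : ℝ :=
  h ^ (-(2 * α)) * ∑ n ∈ Finset.range (N - k + 1), glCoef α n *
    ∑ p ∈ Finset.range (N - k - n + 1), glCoef α p * z (k + n + p)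

theorem sum_advanced_conv_mul_eq_sum_mul_retarded_conv {R : Type*} [CommSemiring R]
    (a f g : ℕ → R) (N : ℕ) :
    ∑ k ∈ range (N + 1), (∑ n ∈ range (N - k + 1), a n * g (k + n)) * f k
      = ∑ j ∈ range (N + 1), g j * ∑ n ∈ range (j + 1), a n * f (j - n) :=
  calc _ = ∑ k ∈ range (N + 1), ∑ j ∈ Ico k (N + 1), a (j - k) * g j * f k := by
          refine sum_congr rfl fun k hk => ?_
          rw [sum_Ico_eq_sum_range, sum_mul, Nat.sub_add_comm (mem_range_succ_iff.mp hk)]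
          simp only [Nat.add_sub_cancel_left]
    _ = ∑ j ∈ range (N + 1), ∑ k ∈ range (j + 1), a (j - k) * g j * f k :=
          sum_comm' fun k j => by simp only [mem_range, mem_Ico]; omega
    _ = _ := by
          refine sum_congr rfl fun j _ => ?_
          rw [mul_sum, ← sum_range_reflect]
          refine sum_congr rfl fun n hn => ?_
          rw [add_tsub_cancel_right, Nat.sub_sub_self (mem_range_succ_iff.mp hn)]
          ring

theorem discrete_fractional_integration_by_parts_general
    (α h : ℝ)
    (N : ℕ) (F G : ℕ → ℝ)
    (hFN : F N = 0) (hG0 : G 0 = 0) :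
    ∑ k ∈ Finset.range N, dfracPlus α h N G k * F k
      = ∑ k ∈ Finset.Icc 1 N, G k * dfracMinus α h F k := by
  have extend_left : ∑ k ∈ range N, dfracPlus α h N G k * F k
      = ∑ k ∈ range (N + 1), dfracPlus α h N G k * F k := by
    rw [sum_range_succ, hFN, mul_zero, add_zero]
  have extend_right : ∑ k ∈ Icc 1 N, G k * dfracMinus α h F k
      = ∑ k ∈ range (N + 1), G k * dfracMinus α h F k := by
    rw [range_eq_Ico, sum_eq_sum_Ico_succ_bot N.succ_pos, hG0, zero_mul, zero_add,
      Nat.succ_eq_add_one, zero_add, Ico_add_one_right_eq_Icc]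
  rw [extend_left, extend_right]
  simp only [dfracPlus, dfracMinus, mul_assoc, mul_left_comm (G _), ← mul_sum]
  rw [sum_advanced_conv_mul_eq_sum_mul_retarded_conv]

/-- discrete asymmetric integration by parts:
`∑_{k=0}^{N-1} (Δ_+^α G_k) F_k = ∑_{k=1}^{N} G_k (Δ_-^α F_k)`. -/
theorem discrete_fractional_integration_by_parts
    (α h : ℝ) (hα0 : 0 ≤ α) (hα1 : α ≤ 1) (hh : 0 < h)
    (N : ℕ) (hN : 1 ≤ N) (F G : ℕ → ℝ)
    (hF0 : F 0 = 0) (hFN : F N = 0) (hG0 : G 0 = 0) (hGN : G N = 0) :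
    ∑ k ∈ Finset.range N, dfracPlus α h N G k * F k
      = ∑ k ∈ Finset.Icc 1 N, G k * dfracMinus α h F k :=
  discrete_fractional_integration_by_parts_general α h N F G hFN hG0
end

section
/- Under the same hypotheses as the discrete integration-by-parts lemma (sequences F, G of length N+1 with vanishing endpoints F_0 = F_N = G_0 = G_N = 0, and discrete fractional derivatives Δ_±^α with Grünwald–Letnikov coefficients), one has ∑_{k=0}^{N-1} G_{k+1} (Δ_-^α F_{k+1}) = ∑_{k=1}^{N-1} (Δ_+^α G_k) F_k. -/
open Finset

/-
Both sides are the same double sum `∑_{0 ≤ i ≤ j ≤ N} α_{j-i} G_j F_i`, summed over `j` first on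
the left and over `i` first on the right: `Δ_-^α` and `Δ_+^α` are transposes of each other on
`{0, …, N}`. The shift on the left only adds the term `j = 0` and the right omits the terms
`k = 0, N`; all three vanish because `F` vanishes at both endpoints.
-/

theorem sum_mul_sum_range_sub_eq_sum_sum_range_add_mul {R : Type*} [CommSemiring R]
    (c F G : ℕ → R) (N : ℕ) :
    ∑ j ∈ range (N + 1), G j * ∑ n ∈ range (j + 1), c n * F (j - n)
      = ∑ i ∈ range (N + 1), (∑ n ∈ range (N - i + 1), c n * G (i + n)) * F i := by
  calc ∑ j ∈ range (N + 1), G j * ∑ n ∈ range (j + 1), c n * F (j - n)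
      = ∑ j ∈ range (N + 1), ∑ i ∈ range (j + 1), c (j - i) * G (i + (j - i)) * F i := by
        refine sum_congr rfl fun j _ => ?_
        rw [mul_sum, ← sum_range_reflect]
        refine sum_congr rfl fun i hi => ?_
        have hij : i ≤ j := Nat.lt_succ_iff.mp (mem_range.mp hi)
        rw [Nat.add_sub_cancel, Nat.sub_sub_self hij, Nat.add_sub_cancel' hij]
        ring
    _ = ∑ i ∈ range (N + 1), ∑ n ∈ range (N + 1 - i), c n * G (i + n) * F i :=
        sum_range_diag_flip (N + 1) fun i n => c n * G (i + n) * F i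
    _ = ∑ i ∈ range (N + 1), (∑ n ∈ range (N - i + 1), c n * G (i + n)) * F i := by
        refine sum_congr rfl fun i hi => ?_
        rw [sum_mul, Nat.sub_add_comm (Nat.lt_succ_iff.mp (mem_range.mp hi))]

theorem sum_mul_dfracMinus_eq_sum_dfracPlus_mul (α h : ℝ) (N : ℕ) (F G : ℕ → ℝ) :
    ∑ j ∈ range (N + 1), G j * dfracMinus α h F j
      = ∑ i ∈ range (N + 1), dfracPlus α h N G i * F i := by
  simp only [dfracMinus, dfracPlus, mul_left_comm (G _), mul_assoc, ← mul_sum]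
  rw [sum_mul_sum_range_sub_eq_sum_sum_range_add_mul]

theorem glCoef_zero (α : ℝ) : glCoef α 0 = 1 := by
  simp [glCoef]

theorem dfracMinus_zero (α h : ℝ) (z : ℕ → ℝ) : dfracMinus α h z 0 = h ^ (-α) * z 0 := by
  simp [dfracMinus, glCoef_zero]

theorem sum_range_succ_eq_sum_Icc_of_eq_zero {M : Type*} [AddCommMonoid M] (f : ℕ → M) (N : ℕ)
    (h0 : f 0 = 0) (hN : f N = 0) :
    ∑ k ∈ range (N + 1), f k = ∑ k ∈ Icc 1 (N - 1), f k := by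
  refine (sum_subset (fun k hk => ?_) fun k hk hk' => ?_).symm
  · simp only [mem_Icc] at hk
    exact mem_range.mpr (by omega)
  · obtain rfl | rfl : k = 0 ∨ k = N := by
      simp only [mem_range, mem_Icc] at hk hk'
      omega
    exacts [h0, hN]

theorem discrete_fractional_integration_by_parts_shifted_general
    (α h : ℝ)
    (N : ℕ) (F G : ℕ → ℝ)
    (hF0 : F 0 = 0) (hFN : F N = 0) :
    ∑ k ∈ Finset.range N, G (k + 1) * dfracMinus α h F (k + 1)
      = ∑ k ∈ Finset.Icc 1 (N - 1), dfracPlus α h N G k * F k := by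
  have hshift : ∑ k ∈ range N, G (k + 1) * dfracMinus α h F (k + 1)
      = ∑ j ∈ range (N + 1), G j * dfracMinus α h F j := by
    rw [sum_range_succ' _ N, dfracMinus_zero, hF0, mul_zero, mul_zero, add_zero]
  rw [hshift, sum_mul_dfracMinus_eq_sum_dfracPlus_mul,
    sum_range_succ_eq_sum_Icc_of_eq_zero _ N (by rw [hF0, mul_zero]) (by rw [hFN, mul_zero])]

/-- shifted discrete asymmetric integration by parts:
`∑_{k=0}^{N-1} G_{k+1} (Δ_-^α F_{k+1}) = ∑_{k=1}^{N-1} (Δ_+^α G_k) F_k`. -/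
theorem discrete_fractional_integration_by_parts_shifted
    (α h : ℝ) (hα0 : 0 ≤ α) (hα1 : α ≤ 1) (hh : 0 < h)
    (N : ℕ) (hN : 1 ≤ N) (F G : ℕ → ℝ)
    (hF0 : F 0 = 0) (hFN : F N = 0) (hG0 : G 0 = 0) (hGN : G N = 0) :
    ∑ k ∈ Finset.range N, G (k + 1) * dfracMinus α h F (k + 1)
      = ∑ k ∈ Finset.Icc 1 (N - 1), dfracPlus α h N G k * F k :=
  discrete_fractional_integration_by_parts_shifted_general α h N F G hF0 hFN
end

section
/- (Sufficiency under restricted variations, discrete case.) Let N ≥ 2 and let L_d^k : ℝ^{d(k+2)} × ℝ^{d(N+1-k)} → ℝ, k = 0,…,N-1, be differentiable. A discrete curve pair (x_k)_{0:N}, (y_k)_{0:N} satisfies, for each k = 1,…,N-1, ∑_{i=k-1}^{N-1} D_{x_k} L_d^i(x_{(0,i+1)}, y_{(i,N)}) + ∑_{i=0}^{k} D_{y_k} L_d^i(x_{(0,i+1)}, y_{(i,N)}) = 0 if and only if the first variation of the discrete action S_d = ∑_{k=0}^{N-1} L_d^k(x_{(0,k+1)}, y_{(k,N)}) vanishes for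 all restricted variations (δx_k = δy_k for all k, with δx_0 = δx_N = 0). -/
/-!
Along a restricted variation `η` the derivative of the action is `Φ (η, η)`, where
`Φ = ∑ᵢ D L_d^i (x, y)` is a linear functional. Since `L_d^i` does not depend on `x_k` for
`k > i + 1` nor on `y_k` for `k < i`, the partial derivatives left out of the two sums of the
Euler–Lagrange expression vanish, so that expression at `(k, j)` is exactly `Φ (e_{kj}, e_{kj})`.
A linear functional vanishes on every `η` with `η_0 = η_N = 0` iff it vanishes on the basis
vectors `e_{kj}` with `0 < k < N`.
-/

open Finset

theorem fderiv_apply_eq_zero_of_forall_add_smul_eq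
    {𝕜 E F : Type*} [NontriviallyNormedField 𝕜] [NormedAddCommGroup E] [NormedSpace 𝕜 E]
    [NormedAddCommGroup F] [NormedSpace 𝕜 F] {f : E → F} {p v : E}
    (h : ∀ t : 𝕜, f (p + t • v) = f p) : fderiv 𝕜 f p v = 0 := by
  -- without differentiability, `fderiv` is `0` by convention
  by_cases hf : DifferentiableAt 𝕜 f p
  · rw [← hf.lineDeriv_eq_fderiv, lineDeriv, funext h, deriv_const]
  · simp [fderiv_zero_of_not_differentiableAt hf]

theorem deriv_sum_comp_add_smul
    {𝕜 E F ι : Type*} [NontriviallyNormedField 𝕜] [NormedAddCommGroup E] [NormedSpace 𝕜 E]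
    [NormedAddCommGroup F] [NormedSpace 𝕜 F] {s : Finset ι} {f : ι → E → F} {p : E}
    (hf : ∀ i ∈ s, DifferentiableAt 𝕜 (f i) p) (v : E) :
    deriv (fun t : 𝕜 => ∑ i ∈ s, f i (p + t • v)) 0 = (∑ i ∈ s, fderiv 𝕜 (f i) p) v :=
  ((HasFDerivAt.fun_sum fun i hi => (hf i hi).hasFDerivAt).hasLineDerivAt v).deriv

theorem LinearMap.forall_map_single_single_eq_zero_iff
    {R ι κ M : Type*} [Semiring R] [AddCommMonoid M] [Module R M]
    [Fintype ι] [DecidableEq ι] [Fintype κ] [DecidableEq κ]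
    (ψ : (ι → κ → R) →ₗ[R] M) (p : ι → Prop) :
    (∀ k, ¬ p k → ∀ j, ψ (Pi.single k (Pi.single j 1)) = 0) ↔
      ∀ η : ι → κ → R, (∀ k, p k → η k = 0) → ψ η = 0 := by
  constructor
  · intro h η hη
    have hdecomp : η = ∑ k, ∑ j, η k j • Pi.single k (Pi.single j 1) := by
      ext k j; simp [Finset.sum_apply, Pi.single_apply, apply_ite (fun f : κ → R => f j)]
    rw [hdecomp, map_sum]
    refine sum_eq_zero fun k _ => ?_
    by_cases hk : p k
    · simp [hη k hk]
    · simp [h k hk]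
  · intro h k hk j
    refine h _ fun k' hk' => Pi.single_eq_of_ne ?_ _
    rintro rfl; exact hk hk'

section DiscreteLagrangian

variable {E F : Type*} [NormedAddCommGroup E] [NormedSpace ℝ E]
  [NormedAddCommGroup F] [NormedSpace ℝ F] {N : ℕ}

theorem fderiv_apply_single_fst_eq_zero {ℓ : (Fin (N + 1) → E) → (Fin (N + 1) → E) → F} {i : ℕ}
    (hdep : ∀ X X' Y : Fin (N + 1) → E,
      (∀ j : Fin (N + 1), (j : ℕ) ≤ i + 1 → X j = X' j) → ℓ X Y = ℓ X' Y)
    (X Y : Fin (N + 1) → E) {k : Fin (N + 1)} (hk : i + 1 < k) (v : E) :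
    fderiv ℝ (fun q : (Fin (N + 1) → E) × (Fin (N + 1) → E) => ℓ q.1 q.2) (X, Y)
      (Pi.single k v, 0) = 0 := by
  refine fderiv_apply_eq_zero_of_forall_add_smul_eq fun t => ?_
  simp only [Prod.smul_mk, Prod.mk_add_mk, smul_zero, add_zero]
  refine hdep _ _ _ fun j hj => ?_
  simp [Pi.single_eq_of_ne (Fin.ne_of_val_ne (by omega) : j ≠ k)]

theorem fderiv_apply_single_snd_eq_zero {ℓ : (Fin (N + 1) → E) → (Fin (N + 1) → E) → F} {i : ℕ}
    (hdep : ∀ X Y Y' : Fin (N + 1) → E,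
      (∀ j : Fin (N + 1), i ≤ (j : ℕ) → Y j = Y' j) → ℓ X Y = ℓ X Y')
    (X Y : Fin (N + 1) → E) {k : Fin (N + 1)} (hk : (k : ℕ) < i) (v : E) :
    fderiv ℝ (fun q : (Fin (N + 1) → E) × (Fin (N + 1) → E) => ℓ q.1 q.2) (X, Y)
      (0, Pi.single k v) = 0 := by
  refine fderiv_apply_eq_zero_of_forall_add_smul_eq fun t => ?_
  simp only [Prod.smul_mk, Prod.mk_add_mk, smul_zero, add_zero]
  refine hdep _ _ _ fun j hj => ?_
  simp [Pi.single_eq_of_ne (Fin.ne_of_val_ne (by omega) : j ≠ k)]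

theorem sum_Icc_fderiv_single_fst_add_sum_Icc_fderiv_single_snd
    {L : ℕ → (Fin (N + 1) → E) → (Fin (N + 1) → E) → F}
    (hdepx : ∀ i < N, ∀ X X' Y : Fin (N + 1) → E,
      (∀ j : Fin (N + 1), (j : ℕ) ≤ i + 1 → X j = X' j) → L i X Y = L i X' Y)
    (hdepy : ∀ i < N, ∀ X Y Y' : Fin (N + 1) → E,
      (∀ j : Fin (N + 1), i ≤ (j : ℕ) → Y j = Y' j) → L i X Y = L i X Y')
    (X Y : Fin (N + 1) → E) {k : Fin (N + 1)} (hk : (k : ℕ) < N) (v : E) :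
    (∑ i ∈ Icc ((k : ℕ) - 1) (N - 1),
        fderiv ℝ (fun q : (Fin (N + 1) → E) × (Fin (N + 1) → E) => L i q.1 q.2) (X, Y)
          (Pi.single k v, 0))
      + (∑ i ∈ Icc 0 (k : ℕ),
        fderiv ℝ (fun q : (Fin (N + 1) → E) × (Fin (N + 1) → E) => L i q.1 q.2) (X, Y)
          (0, Pi.single k v))
      = (∑ i ∈ range N,
        fderiv ℝ (fun q : (Fin (N + 1) → E) × (Fin (N + 1) → E) => L i q.1 q.2) (X, Y))
          (Pi.single k v, Pi.single k v) := by
  have hsplit : ((Pi.single k v, Pi.single k v) : (Fin (N + 1) → E) × (Fin (N + 1) → E))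
      = (Pi.single k v, 0) + (0, Pi.single k v) := by simp
  simp only [_root_.sum_apply, hsplit, map_add]
  congr 1
  · refine sum_subset (fun i hi => ?_) fun i hi hi' => ?_
    · simp only [mem_Icc, mem_range] at hi ⊢; omega
    · simp only [mem_Icc, mem_range] at hi hi'
      exact fderiv_apply_single_fst_eq_zero (hdepx i hi) X Y (by omega) v
  · refine sum_subset (fun i hi => ?_) fun i hi hi' => ?_
    · simp only [mem_Icc, mem_range] at hi ⊢; omega
    · simp only [mem_Icc, mem_range] at hi hi'
      exact fderiv_apply_single_snd_eq_zero (hdepy i hi) X Y (by omega) v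

end DiscreteLagrangian

theorem discrete_restricted_first_variation_iff_general (d N : ℕ)
    (L : ℕ → (Fin (N + 1) → Fin d → ℝ) → (Fin (N + 1) → Fin d → ℝ) → ℝ)
    (hdiff : ∀ i < N, Differentiable ℝ
      (fun q : (Fin (N + 1) → Fin d → ℝ) × (Fin (N + 1) → Fin d → ℝ) => L i q.1 q.2))
    (hdepx : ∀ i < N, ∀ X X' Y : Fin (N + 1) → Fin d → ℝ,
      (∀ j : Fin (N + 1), (j : ℕ) ≤ i + 1 → X j = X' j) → L i X Y = L i X' Y)
    (hdepy : ∀ i < N, ∀ X Y Y' : Fin (N + 1) → Fin d → ℝ,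
      (∀ j : Fin (N + 1), i ≤ (j : ℕ) → Y j = Y' j) → L i X Y = L i X Y')
    (X Y : Fin (N + 1) → Fin d → ℝ) :
    (∀ k : Fin (N + 1), 1 ≤ (k : ℕ) → (k : ℕ) ≤ N - 1 → ∀ j : Fin d,
      (∑ i ∈ Finset.Icc ((k : ℕ) - 1) (N - 1),
        fderiv ℝ (fun q : (Fin (N + 1) → Fin d → ℝ) × (Fin (N + 1) → Fin d → ℝ) =>
          L i q.1 q.2) (X, Y) (Pi.single k (Pi.single j 1), 0))
      + (∑ i ∈ Finset.Icc 0 (k : ℕ),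
        fderiv ℝ (fun q : (Fin (N + 1) → Fin d → ℝ) × (Fin (N + 1) → Fin d → ℝ) =>
          L i q.1 q.2) (X, Y) (0, Pi.single k (Pi.single j 1))) = 0)
    ↔ (∀ η : Fin (N + 1) → Fin d → ℝ, η 0 = 0 → η (Fin.last N) = 0 →
        deriv (fun ε : ℝ => ∑ i ∈ Finset.range N, L i (X + ε • η) (Y + ε • η)) 0 = 0) := by
  set Φ := ∑ i ∈ range N,
    fderiv ℝ (fun q : (Fin (N + 1) → Fin d → ℝ) × (Fin (N + 1) → Fin d → ℝ) => L i q.1 q.2) (X, Y)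
  have hvar (η : Fin (N + 1) → Fin d → ℝ) :
      deriv (fun ε : ℝ => ∑ i ∈ range N, L i (X + ε • η) (Y + ε • η)) 0 = Φ (η, η) :=
    deriv_sum_comp_add_smul (f := fun i q => L i q.1 q.2) (p := (X, Y))
      (fun i hi => (hdiff i (mem_range.1 hi)).differentiableAt) (η, η)
  have hinterior (k : Fin (N + 1)) :
      ¬(k = 0 ∨ k = Fin.last N) ↔ 1 ≤ (k : ℕ) ∧ (k : ℕ) ≤ N - 1 := by
    simp only [Fin.ext_iff, Fin.val_zero, Fin.val_last]; omega
  calc _ ↔ ∀ k : Fin (N + 1), ¬(k = 0 ∨ k = Fin.last N) → ∀ j : Fin d,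
        Φ (Pi.single k (Pi.single j 1), Pi.single k (Pi.single j 1)) = 0 := by
        refine forall_congr' fun k => ?_
        rw [hinterior k, and_imp]
        refine forall₂_congr fun hk₁ hk₂ => forall_congr' fun j => ?_
        rw [sum_Icc_fderiv_single_fst_add_sum_Icc_fderiv_single_snd hdepx hdepy X Y (by omega)]
    _ ↔ ∀ η : Fin (N + 1) → Fin d → ℝ,
          (∀ k, (k = 0 ∨ k = Fin.last N) → η k = 0) → Φ (η, η) = 0 :=
        (Φ.toLinearMap ∘ₗ LinearMap.id.prod LinearMap.id).forall_map_single_single_eq_zero_iff _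
    _ ↔ _ := by simp only [or_imp, forall_and, forall_eq, and_imp, hvar]

/-- sufficiency--necessity under restricted variations, discrete
case: a discrete curve pair `(X, Y)` satisfies, for each `k = 1,…,N-1`,
`∑_{i=k-1}^{N-1} D_{x_k} L_d^i + ∑_{i=0}^{k} D_{y_k} L_d^i = 0`
if and only if the first variation of the discrete action
`S_d = ∑_{k=0}^{N-1} L_d^k` vanishes for all restricted variations
(`δx = δy = η`, with `η_0 = η_N = 0`).  Here `L_d^i` depends only on
`x_0,…,x_{i+1}` and `y_i,…,y_N`, and is differentiable. -/
theorem discrete_restricted_first_variation_iff (d N : ℕ) (hN : 2 ≤ N)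
    (L : ℕ → (Fin (N + 1) → Fin d → ℝ) → (Fin (N + 1) → Fin d → ℝ) → ℝ)
    (hdiff : ∀ i < N, Differentiable ℝ
      (fun q : (Fin (N + 1) → Fin d → ℝ) × (Fin (N + 1) → Fin d → ℝ) => L i q.1 q.2))
    (hdepx : ∀ i < N, ∀ X X' Y : Fin (N + 1) → Fin d → ℝ,
      (∀ j : Fin (N + 1), (j : ℕ) ≤ i + 1 → X j = X' j) → L i X Y = L i X' Y)
    (hdepy : ∀ i < N, ∀ X Y Y' : Fin (N + 1) → Fin d → ℝ,
      (∀ j : Fin (N + 1), i ≤ (j : ℕ) → Y j = Y' j) → L i X Y = L i X Y')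
    (X Y : Fin (N + 1) → Fin d → ℝ) :
    (∀ k : Fin (N + 1), 1 ≤ (k : ℕ) → (k : ℕ) ≤ N - 1 → ∀ j : Fin d,
      (∑ i ∈ Finset.Icc ((k : ℕ) - 1) (N - 1),
        fderiv ℝ (fun q : (Fin (N + 1) → Fin d → ℝ) × (Fin (N + 1) → Fin d → ℝ) =>
          L i q.1 q.2) (X, Y) (Pi.single k (Pi.single j 1), 0))
      + (∑ i ∈ Finset.Icc 0 (k : ℕ),
        fderiv ℝ (fun q : (Fin (N + 1) → Fin d → ℝ) × (Fin (N + 1) → Fin d → ℝ) =>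
          L i q.1 q.2) (X, Y) (0, Pi.single k (Pi.single j 1))) = 0)
    ↔ (∀ η : Fin (N + 1) → Fin d → ℝ, η 0 = 0 → η (Fin.last N) = 0 →
        deriv (fun ε : ℝ => ∑ i ∈ Finset.range N, L i (X + ε • η) (Y + ε • η)) 0 = 0) :=
  discrete_restricted_first_variation_iff_general d N L hdiff hdepx hdepy X Y
end

section
/- (FVI equals symplectic-Euler-type scheme with linear damping for α = 1/2.) Let m, ρ, 𝔠 > 0, h > 0 and U : ℝ → ℝ differentiable. Consider the discrete Lagrangian L_d(u,v) = (1/(2h)) m (v-u)² - h U(v) and the restricted fractional discrete Euler–Lagrange equation with α = 1/2: m (x_{k+1} - 2x_k + x_{k-1})/h² + U'(x_k) + ρ Δ_-^{1/2}Δ_-^{1/2} x_k = 0. Setting p_{x_k} := m (x_{k+1} - x_k)/h, this scheme is equivalent to the map x_{k+1} = x_k + h m^{-1} p_{x_k}, p_{x_{k+1}} = p_{x_k} - h U'(x_{k+1}) - h ρ m^{-1} p_{x_k}. -/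
open Finset

/-!
Up to signs the Grünwald–Letnikov coefficients are binomial coefficients,
`glCoef α n = (-1)^n * (α choose n)`, so the Chu–Vandermonde identity makes the retarded
operators a semigroup: `Δ_-^α Δ_-^α = Δ_-^{2α}`. For `α = 1/2` this is `Δ_-^1`, the backward
difference quotient, because `(1 choose n) = 0` for `n ≥ 2`. The fractional Euler–Lagrange
equation at `k + 1` is then `1/h` times the damped momentum update from `p_k` to `p_{k+1}`.
-/

open Polynomial in
lemma glCoef_eq_neg_one_pow_mul_choose (α : ℝ) (n : ℕ) :
    glCoef α n = (-1) ^ n * Ring.choose α n := by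
  rw [Ring.choose_eq_smul, ← aeval_eq_smeval, aeval_def, eval₂_eq_eval_map, descPochhammer_map,
    descPochhammer_eval_eq_prod_range, smul_eq_mul, glCoef]
  ring

lemma sum_glCoef_mul_glCoef (α β : ℝ) (j : ℕ) :
    ∑ n ∈ range (j + 1), glCoef α n * glCoef β (j - n) = glCoef (α + β) j := by
  simp only [glCoef_eq_neg_one_pow_mul_choose, Ring.add_choose_eq j (Commute.all α β),
    Finset.Nat.sum_antidiagonal_eq_sum_range_succ (fun a b => Ring.choose α a * Ring.choose β b),
    mul_sum]
  refine sum_congr rfl fun n hn => ?_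
  rw [← pow_sub_mul_pow (-1 : ℝ) (Nat.le_of_lt_succ (mem_range.1 hn))]
  ring

lemma sum_range_sum_range_sub (k : ℕ) (f : ℕ → ℕ → ℝ) :
    ∑ n ∈ range (k + 1), ∑ p ∈ range (k - n + 1), f n p
      = ∑ j ∈ range (k + 1), ∑ n ∈ range (j + 1), f n (j - n) := by
  rw [sum_range_diag_flip]
  refine sum_congr rfl fun n hn => ?_
  rw [Nat.sub_add_comm (Nat.le_of_lt_succ (mem_range.1 hn))]

lemma ddfracMinus_eq_dfracMinus_two_mul (α h : ℝ) (z : ℕ → ℝ) (k : ℕ) :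
    ddfracMinus α h z k = dfracMinus (2 * α) h z k := by
  rw [ddfracMinus, dfracMinus]
  congr 1
  simp_rw [mul_sum]
  rw [sum_range_sum_range_sub]
  refine sum_congr rfl fun j hj => ?_
  rw [two_mul, ← sum_glCoef_mul_glCoef, sum_mul]
  refine sum_congr rfl fun n hn => ?_
  rw [Nat.sub_sub, Nat.add_sub_cancel' (Nat.le_of_lt_succ (mem_range.1 hn))]
  ring

lemma glCoef_natCast_of_lt {m j : ℕ} (hmj : m < j) : glCoef m j = 0 := by
  rw [glCoef_eq_neg_one_pow_mul_choose, Ring.choose_natCast, Nat.choose_eq_zero_of_lt hmj,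
    Nat.cast_zero, mul_zero]

lemma dfracMinus_one_succ (h : ℝ) (z : ℕ → ℝ) (k : ℕ) :
    dfracMinus 1 h z (k + 1) = (z (k + 1) - z k) / h := by
  have hvanish : ∀ j ∈ range k, glCoef 1 (j + 1 + 1) * z (k + 1 - (j + 1 + 1)) = 0 := fun j _ => by
    rw [← Nat.cast_one, glCoef_natCast_of_lt (by omega), zero_mul]
  have hc0 : glCoef 1 0 = 1 := by norm_num [glCoef]
  have hc1 : glCoef 1 1 = -1 := by norm_num [glCoef]
  rw [dfracMinus, sum_range_succ', sum_range_succ', sum_eq_zero hvanish, hc0, hc1,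
    Real.rpow_neg_one, Nat.add_sub_cancel, Nat.sub_zero]
  ring

lemma ddfracMinus_half_succ (h : ℝ) (z : ℕ → ℝ) (k : ℕ) :
    ddfracMinus (1 / 2) h z (k + 1) = (z (k + 1) - z k) / h := by
  rw [ddfracMinus_eq_dfracMinus_two_mul, mul_one_div_cancel two_ne_zero, dfracMinus_one_succ]

theorem fvi_half_eq_damped_symplectic_euler_general (m ρ h : ℝ)
    (hm : 0 < m) (hh : 0 < h)
    (U : ℝ → ℝ)
    (x p : ℕ → ℝ) (hp : ∀ k, p k = m * (x (k + 1) - x k) / h) :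
    (∀ k, 1 ≤ k →
      m * (x (k + 1) - 2 * x k + x (k - 1)) / h ^ 2 + deriv U (x k)
        + ρ * ddfracMinus (1 / 2) h x k = 0)
    ↔ (∀ k, x (k + 1) = x k + h * m⁻¹ * p k ∧
        p (k + 1) = p k - h * deriv U (x (k + 1)) - h * ρ * m⁻¹ * p k) := by
  have position_update (k : ℕ) : x (k + 1) = x k + h * m⁻¹ * p k := by
    rw [hp k]; field_simp; ring
  have residual (k : ℕ) :
      m * (x (k + 2) - 2 * x (k + 1) + x k) / h ^ 2 + deriv U (x (k + 1))
        + ρ * ddfracMinus (1 / 2) h x (k + 1)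
      = (p (k + 1) - (p k - h * deriv U (x (k + 1)) - h * ρ * m⁻¹ * p k)) / h := by
    rw [ddfracMinus_half_succ, hp, hp]
    field_simp
    ring
  constructor
  · intro hEL k
    have hEL_succ := hEL (k + 1) le_add_self
    rw [Nat.add_sub_cancel, residual, div_eq_zero_iff, sub_eq_zero, or_iff_left hh.ne'] at hEL_succ
    exact ⟨position_update k, hEL_succ⟩
  · rintro hstep (_ | k) hk
    · omega
    · rw [Nat.add_sub_cancel, residual, sub_eq_zero.2 (hstep k).2, zero_div]

/-- for `α = 1/2` the fractional variational integrator for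
`L_d(u,v) = (1/(2h)) m (v-u)² - h U(v)` is equivalent to the symplectic-Euler-type
scheme with linear damping, via the discrete momentum `p_k = m(x_{k+1}-x_k)/h`. -/
theorem fvi_half_eq_damped_symplectic_euler (m ρ 𝔠 h : ℝ)
    (hm : 0 < m) (hρ : 0 < ρ) (h𝔠 : 0 < 𝔠) (hh : 0 < h)
    (U : ℝ → ℝ) (hU : Differentiable ℝ U)
    (x p : ℕ → ℝ) (hp : ∀ k, p k = m * (x (k + 1) - x k) / h) :
    (∀ k, 1 ≤ k →
      m * (x (k + 1) - 2 * x k + x (k - 1)) / h ^ 2 + deriv U (x k)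
        + ρ * ddfracMinus (1 / 2) h x k = 0)
    ↔ (∀ k, x (k + 1) = x k + h * m⁻¹ * p k ∧
        p (k + 1) = p k - h * deriv U (x (k + 1)) - h * ρ * m⁻¹ * p k) :=
  fvi_half_eq_damped_symplectic_euler_general m ρ h hm hh U x p hp
end
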